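/- A-posteriori drift bound for the modified Hamiltonian: Let Ω ⊂ ℝ^{2d} be compact, Δt > 0, and let ψ̄ : [0,Δt] × Ω → Ω satisfy ψ̄(0,x) = x and ∂_t ψ̄_t(x) = J ∇_x ℋ̄(t, ψ̄_t(x)) for a continuously differentiable ℋ̄ : [0,Δt] × ℝ^{2d} → ℝ, with ψ̄_t(Ω) ⊆ Ω for every t ∈ [0,Δt]. Let H : ℝ^{2d} → ℝ be continuously differentiable with Lipschitz constant at most C on Ω. Assume |ℋ̄(t,x) − H(x)| ≤ ε₁ and ‖∂_t ψ̄_t(x) − J ∇H(ψ̄_t(x))‖₂ ≤ ε₂ for all t ∈ [0,Δt], x ∈ Ω. Define ψ(t,x) = ψ̄_{t − Δt⌊t/Δt⌋}((ψ̄_{Δt})^{⌊t/Δt⌋}(x)) and ℋ(t,x) = ℋ̄(t − Δt⌊t/Δt⌋, x) for t ≥ 0. Then for every t ≥ 0 and x ∈ Ω, |ℋ(t, ψ(t,x)) − ℋ(0,x)| ≤ 2ε₁ + C ε₂ t. -/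

import Mathlib

noncomputable section

/-- Phase-space factor `ℝ^d`. -/
abbrev Vec (d : ℕ) := EuclideanSpace ℝ (Fin d)

/-- Phase space `ℝ^{2d}` split as positions and momenta. -/
abbrev Phase (d : ℕ) := Vec d × Vec d

/-- Gradient with respect to the position variable. -/
def gradQ {d : ℕ} (H : Phase d → ℝ) (x : Phase d) : Vec d :=
  gradient (fun q => H (q, x.2)) x.1

/-- Gradient with respect to the momentum variable. -/
def gradP {d : ℕ} (H : Phase d → ℝ) (x : Phase d) : Vec d :=
  gradient (fun p => H (x.1, p)) x.2

/-- `J ∇H (q,p) = (∇ₚH(q,p), −∇_qH(q,p))`. -/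
def JgradH {d : ℕ} (H : Phase d → ℝ) (x : Phase d) : Phase d :=
  (gradP H x, - gradQ H x)

/-- The Euclidean (`ℓ²`) norm on `ℝ^{2d} = ℝ^d × ℝ^d`. -/
def l2norm {d : ℕ} (x : Phase d) : ℝ := Real.sqrt (‖x.1‖ ^ 2 + ‖x.2‖ ^ 2)

/-!
Along a flow `γ' = J∇K`, the chain rule gives `(H ∘ γ)' = ⟨∇H, J∇K⟩ = ⟨∇H, J∇K − J∇H⟩`, because
`⟨∇H, J∇H⟩ = 0`. By Cauchy–Schwarz `|(H ∘ γ)'| ≤ C ε₂`, so `H` drifts by at most `C ε₂ Δt` over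
each full step of `ψ̄_{Δt}` and by at most `C ε₂ s` over the final partial step of length `s`;
these add up to `C ε₂ t`. Replacing `H` by `ℋ̄` at the two endpoints costs `ε₁` each.
-/

open Set
open scoped InnerProductSpace

section

variable {d : ℕ}

lemma l2norm_eq_norm_toLp (x : Phase d) : l2norm x = ‖WithLp.toLp 2 x‖ := by
  rw [WithLp.prod_norm_eq_of_L2]
  rfl

lemma l2norm_nonneg (x : Phase d) : 0 ≤ l2norm x := Real.sqrt_nonneg _

lemma fderiv_apply_eq_inner_gradQ_add_inner_gradP {H : Phase d → ℝ} {x : Phase d}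
    (hH : DifferentiableAt ℝ H x) (v : Phase d) :
    fderiv ℝ H x v = ⟪gradQ H x, v.1⟫_ℝ + ⟪gradP H x, v.2⟫_ℝ := by
  have hq : HasFDerivAt (fun q => H (q, x.2))
      ((fderiv ℝ H x).comp (ContinuousLinearMap.inl ℝ (Vec d) (Vec d))) x.1 :=
    hH.hasFDerivAt.comp x.1 (hasFDerivAt_prodMk_left x.1 x.2)
  have hp : HasFDerivAt (fun p => H (x.1, p))
      ((fderiv ℝ H x).comp (ContinuousLinearMap.inr ℝ (Vec d) (Vec d))) x.2 :=
    hH.hasFDerivAt.comp x.2 (hasFDerivAt_prodMk_right x.1 x.2)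
  rw [gradQ, gradP, gradient, gradient, InnerProductSpace.toDual_symm_apply,
    InnerProductSpace.toDual_symm_apply, hq.fderiv, hp.fderiv]
  simp only [ContinuousLinearMap.comp_apply, ContinuousLinearMap.inl_apply,
    ContinuousLinearMap.inr_apply, ← map_add, Prod.mk_add_mk, add_zero, zero_add]

lemma fderiv_apply_JgradH_self {H : Phase d → ℝ} {x : Phase d} (hH : DifferentiableAt ℝ H x) :
    fderiv ℝ H x (JgradH H x) = 0 := by
  rw [fderiv_apply_eq_inner_gradQ_add_inner_gradP hH, JgradH, inner_neg_right, real_inner_comm]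
  exact add_neg_cancel _

lemma fderiv_apply_JgradH_eq_inner {H : Phase d → ℝ} {x : Phase d} (hH : DifferentiableAt ℝ H x)
    (K : Phase d → ℝ) :
    fderiv ℝ H x (JgradH K x) =
      ⟪WithLp.toLp 2 (gradQ H x, gradP H x), WithLp.toLp 2 (JgradH K x - JgradH H x)⟫_ℝ := by
  rw [← add_sub_cancel (JgradH H x) (JgradH K x), map_add, fderiv_apply_JgradH_self hH,
    zero_add, add_sub_cancel_left, fderiv_apply_eq_inner_gradQ_add_inner_gradP hH,
    WithLp.prod_inner_apply]

lemma abs_fderiv_apply_JgradH_le {H : Phase d → ℝ} {x : Phase d} (hH : DifferentiableAt ℝ H x)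
    (K : Phase d → ℝ) :
    |fderiv ℝ H x (JgradH K x)| ≤
      l2norm (gradQ H x, gradP H x) * l2norm (JgradH K x - JgradH H x) := by
  rw [fderiv_apply_JgradH_eq_inner hH, l2norm_eq_norm_toLp, l2norm_eq_norm_toLp]
  exact abs_real_inner_le_norm _ _

theorem abs_sub_le_of_hasDerivWithinAt_JgradH {H : Phase d → ℝ} (hH : Differentiable ℝ H)
    {K : ℝ → Phase d → ℝ} {γ : ℝ → Phase d} {T C ε : ℝ}
    (hγ : ∀ s ∈ Icc 0 T, HasDerivWithinAt γ (JgradH (K s) (γ s)) (Icc 0 T) s)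
    (hgrad : ∀ s ∈ Icc 0 T, l2norm (gradQ H (γ s), gradP H (γ s)) ≤ C)
    (hres : ∀ s ∈ Icc 0 T, l2norm (JgradH (K s) (γ s) - JgradH H (γ s)) ≤ ε)
    {t : ℝ} (ht : t ∈ Icc 0 T) :
    |H (γ t) - H (γ 0)| ≤ C * ε * t := by
  have hderiv : ∀ s ∈ Icc 0 T, HasDerivWithinAt (H ∘ γ)
      (fderiv ℝ H (γ s) (JgradH (K s) (γ s))) (Icc 0 T) s :=
    fun s hs => (hH (γ s)).hasFDerivAt.comp_hasDerivWithinAt s (hγ s hs)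
  have hbound : ∀ s ∈ Icc 0 T, ‖fderiv ℝ H (γ s) (JgradH (K s) (γ s))‖ ≤ C * ε := fun s hs =>
    (abs_fderiv_apply_JgradH_le (hH (γ s)) (K s)).trans <|
      mul_le_mul (hgrad s hs) (hres s hs) (l2norm_nonneg _)
        ((l2norm_nonneg _).trans (hgrad s hs))
  have := (convex_Icc 0 T).norm_image_sub_le_of_norm_hasDerivWithin_le hderiv hbound
    (left_mem_Icc.2 (ht.1.trans ht.2)) ht
  rwa [sub_zero, Real.norm_of_nonneg ht.1] at this

end

theorem abs_sub_iterate_le {α : Type*} {f : α → α} {s : Set α} {V : α → ℝ} {δ : ℝ}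
    (hf : MapsTo f s s) (hV : ∀ y ∈ s, |V (f y) - V y| ≤ δ) {x : α} (hx : x ∈ s) (n : ℕ) :
    |V (f^[n] x) - V x| ≤ n * δ := by
  induction n with
  | zero => simp
  | succ n ih =>
    rw [Function.iterate_succ_apply', Nat.cast_succ, add_one_mul, add_comm]
    exact (abs_sub_le _ _ _).trans (add_le_add (hV _ (hf.iterate n hx)) ih)

lemma sub_mul_floor_div_mem_Icc {t Δt : ℝ} (ht : 0 ≤ t) (hΔt : 0 < Δt) :
    t - Δt * ⌊t / Δt⌋₊ ∈ Icc 0 Δt := by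
  have hle : (⌊t / Δt⌋₊ : ℝ) ≤ t / Δt := Nat.floor_le (div_nonneg ht hΔt.le)
  have hlt : t / Δt < ⌊t / Δt⌋₊ + 1 := Nat.lt_floor_add_one _
  rw [le_div_iff₀ hΔt] at hle
  rw [div_lt_iff₀ hΔt] at hlt
  constructor <;> linarith

theorem aposteriori_modified_hamiltonian_drift_general
    (d : ℕ) (Ω : Set (Phase d))
    (Δt : ℝ) (hΔt : 0 < Δt)
    (ψb : ℝ → Phase d → Phase d)
    (hψ0 : ∀ x ∈ Ω, ψb 0 x = x)
    (hmap : ∀ t ∈ Set.Icc (0:ℝ) Δt, ∀ x ∈ Ω, ψb t x ∈ Ω)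
    (Hb : ℝ → Phase d → ℝ)
    (hflow : ∀ t ∈ Set.Icc (0:ℝ) Δt, ∀ x ∈ Ω,
      HasDerivWithinAt (fun s => ψb s x) (JgradH (Hb t) (ψb t x)) (Set.Icc 0 Δt) t)
    (H : Phase d → ℝ) (hH : ContDiff ℝ 1 H)
    (C : ℝ)
    (hLip : ∀ x ∈ Ω, l2norm (gradQ H x, gradP H x) ≤ C)
    (ε₁ ε₂ : ℝ)
    (hclose : ∀ t ∈ Set.Icc (0:ℝ) Δt, ∀ x ∈ Ω, |Hb t x - H x| ≤ ε₁)
    (hres : ∀ t ∈ Set.Icc (0:ℝ) Δt, ∀ x ∈ Ω,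
      l2norm (JgradH (Hb t) (ψb t x) - JgradH H (ψb t x)) ≤ ε₂) :
    ∀ t ≥ (0:ℝ), ∀ x ∈ Ω,
      |Hb (t - Δt * (⌊t / Δt⌋₊ : ℝ))
          (ψb (t - Δt * (⌊t / Δt⌋₊ : ℝ)) ((ψb Δt)^[⌊t / Δt⌋₊] x))
        - Hb 0 x| ≤ 2 * ε₁ + C * ε₂ * t := by
  intro t ht x hx
  have hdrift : ∀ y ∈ Ω, ∀ s ∈ Icc 0 Δt, |H (ψb s y) - H y| ≤ C * ε₂ * s := fun y hy s hs => by
    simpa only [hψ0 y hy] using abs_sub_le_of_hasDerivWithinAt_JgradH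
      (hH.differentiable one_ne_zero) (hflow · · y hy) (fun r hr => hLip _ (hmap r hr y hy))
      (hres · · y hy) hs
  have hΔ : Δt ∈ Icc 0 Δt := right_mem_Icc.2 hΔt.le
  have hstep : MapsTo (ψb Δt) Ω Ω := fun z hz => hmap Δt hΔ z hz
  set n := ⌊t / Δt⌋₊
  set s := t - Δt * n with hs_def
  have hs : s ∈ Icc 0 Δt := sub_mul_floor_div_mem_Icc ht hΔt
  set y := (ψb Δt)^[n] x
  have hy : y ∈ Ω := hstep.iterate n hx
  have h₁ := abs_le.1 (hclose s hs _ (hmap s hs y hy))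
  have h₂ := abs_le.1 (hdrift y hy s hs)
  have h₃ := abs_le.1 (abs_sub_iterate_le hstep (fun z hz => hdrift z hz Δt hΔ) hx n)
  have h₄ := abs_le.1 (hclose 0 (left_mem_Icc.2 hΔt.le) x hx)
  have htime : C * ε₂ * s + n * (C * ε₂ * Δt) = C * ε₂ * t := by rw [hs_def]; ring
  rw [abs_le]
  constructor <;> linarith

/-- **A-posteriori drift bound for the modified Hamiltonian.**
`ψ̄` is the exact flow (from time `0`) of the time-dependent modified Hamiltonian `ℋ̄`, maps
`Ω` into itself, `|ℋ̄ − H| ≤ ε₁` on `[0,Δt] × Ω`, the residual with respect to `J∇H` is at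
most `ε₂`, and `H` is `C¹` with Lipschitz constant at most `C` on `Ω` (i.e. `‖∇H‖₂ ≤ C` on
`Ω`).  Then the extended modified Hamiltonian `ℋ(t,x) = ℋ̄(t − Δt⌊t/Δt⌋, x)` along the
long-time extension `ψ(t,x) = ψ̄_{t−Δt⌊t/Δt⌋}((ψ̄_{Δt})^{⌊t/Δt⌋}(x))` drifts by at most
`2ε₁ + C ε₂ t`. -/
theorem aposteriori_modified_hamiltonian_drift
    (d : ℕ) (Ω : Set (Phase d)) (hΩ : IsCompact Ω)
    (Δt : ℝ) (hΔt : 0 < Δt)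
    (ψb : ℝ → Phase d → Phase d)
    (hψ0 : ∀ x ∈ Ω, ψb 0 x = x)
    (hmap : ∀ t ∈ Set.Icc (0:ℝ) Δt, ∀ x ∈ Ω, ψb t x ∈ Ω)
    (Hb : ℝ → Phase d → ℝ)
    (hHb : ContDiffOn ℝ 1 (fun z : ℝ × Phase d => Hb z.1 z.2)
      (Set.Icc (0:ℝ) Δt ×ˢ (Set.univ : Set (Phase d))))
    (hflow : ∀ t ∈ Set.Icc (0:ℝ) Δt, ∀ x ∈ Ω,
      HasDerivWithinAt (fun s => ψb s x) (JgradH (Hb t) (ψb t x)) (Set.Icc 0 Δt) t)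
    (H : Phase d → ℝ) (hH : ContDiff ℝ 1 H)
    (C : ℝ)
    (hLip : ∀ x ∈ Ω, l2norm (gradQ H x, gradP H x) ≤ C)
    (ε₁ ε₂ : ℝ)
    (hclose : ∀ t ∈ Set.Icc (0:ℝ) Δt, ∀ x ∈ Ω, |Hb t x - H x| ≤ ε₁)
    (hres : ∀ t ∈ Set.Icc (0:ℝ) Δt, ∀ x ∈ Ω,
      l2norm (JgradH (Hb t) (ψb t x) - JgradH H (ψb t x)) ≤ ε₂) :
    ∀ t ≥ (0:ℝ), ∀ x ∈ Ω,
      |Hb (t - Δt * (⌊t / Δt⌋₊ : ℝ))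
          (ψb (t - Δt * (⌊t / Δt⌋₊ : ℝ)) ((ψb Δt)^[⌊t / Δt⌋₊] x))
        - Hb 0 x| ≤ 2 * ε₁ + C * ε₂ * t :=
  aposteriori_modified_hamiltonian_drift_general d Ω Δt hΔt ψb hψ0 hmap Hb hflow H hH C hLip ε₁ ε₂
    hclose hres
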